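/- Let S be a congruence-simple semiring with a multiplicatively absorbing element w such that x² ≠ w for every x ∈ S with x ≠ w. Then a·b ≠ w for all a, b ∈ S with a ≠ w and b ≠ w (i.e., S has no non-trivial zero-divisors with respect to w). -/

import Mathlib

universe u

/-- A semiring in the sense of the paper: a (nonempty) set with an associative
commutative addition and an associative multiplication distributing over
addition from both sides.  No additive or multiplicative identity is assumed. -/
class PaperSemiring (S : Type*) extends Add S, Mul S where
  add_assoc : ∀ a b c : S, a + b + c = a + (b + c)
  add_comm : ∀ a b : S, a + b = b + a
  mul_assoc : ∀ a b c : S, a * b * c = a * (b * c)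
  left_distrib : ∀ a b c : S, a * (b + c) = a * b + a * c
  right_distrib : ∀ a b c : S, (a + b) * c = a * c + b * c

/-- `nfoldAdd n x` is the `n`-fold sum `x + ⋯ + x` (only meaningful for `n ≥ 1`;
we set `nfoldAdd 0 x = x` as a junk value). -/
def nfoldAdd {S : Type*} [Add S] : ℕ → S → S
  | 0, x => x
  | 1, x => x
  | n + 2, x => nfoldAdd (n + 1) x + x

/-- `nfoldMul n x` is the `n`-fold product `x * ⋯ * x` (only meaningful for `n ≥ 1`;
we set `nfoldMul 0 x = x` as a junk value). -/
def nfoldMul {S : Type*} [Mul S] : ℕ → S → S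
  | 0, x => x
  | 1, x => x
  | n + 2, x => nfoldMul (n + 1) x * x

/-- `w` is multiplicatively absorbing. -/
def MulAbsorbing {S : Type*} [Mul S] (w : S) : Prop :=
  ∀ x : S, x * w = w ∧ w * x = w

/-- `w` is a zero element: multiplicatively absorbing and additively neutral. -/
def IsZeroElem {S : Type*} [Add S] [Mul S] (w : S) : Prop :=
  MulAbsorbing w ∧ ∀ x : S, x + w = x

/-- `w` is bi-absorbing: multiplicatively and additively absorbing. -/
def BiAbsorbing {S : Type*} [Add S] [Mul S] (w : S) : Prop :=
  MulAbsorbing w ∧ ∀ x : S, x + w = w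

/-- `I` is an ideal: nonempty, `I+I ⊆ I`, `S·I ⊆ I`, `I·S ⊆ I`. -/
def IsIdealSet {S : Type*} [Add S] [Mul S] (I : Set S) : Prop :=
  I.Nonempty ∧ (∀ a ∈ I, ∀ b ∈ I, a + b ∈ I) ∧
    ∀ s : S, ∀ a ∈ I, s * a ∈ I ∧ a * s ∈ I

/-- `I` is a bi-ideal: nonempty, `S+I ⊆ I`, `S·I ⊆ I`, `I·S ⊆ I`. -/
def IsBiIdealSet {S : Type*} [Add S] [Mul S] (I : Set S) : Prop :=
  I.Nonempty ∧ (∀ s : S, ∀ a ∈ I, s + a ∈ I) ∧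
    ∀ s : S, ∀ a ∈ I, s * a ∈ I ∧ a * s ∈ I

/-- The relation `α_I`:  `(x,y) ∈ α_I` iff `x + a = y + b` for some `a, b ∈ I`. -/
def alphaRel {S : Type*} [Add S] (I : Set S) (x y : S) : Prop :=
  ∃ a ∈ I, ∃ b ∈ I, x + a = y + b

/-- The relation `β_J = (J×J) ∪ id`. -/
def betaRel {S : Type*} (J : Set S) (x y : S) : Prop :=
  (x ∈ J ∧ y ∈ J) ∨ x = y

/-- The relation `γ_n`: `(x,y) ∈ γ_n` iff `n·x = n·y`. -/
def gammaRel {S : Type*} [Add S] (n : ℕ) (x y : S) : Prop :=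
  nfoldAdd n x = nfoldAdd n y

/-- The relation `δ`: `(x,y) ∈ δ` iff `2^i·x = y + u` and `2^i·y = x + v` for
some `i ≥ 0` and `u, v ∈ S`. -/
def deltaRel {S : Type*} [Add S] (x y : S) : Prop :=
  ∃ (i : ℕ) (u v : S), nfoldAdd (2 ^ i) x = y + u ∧ nfoldAdd (2 ^ i) y = x + v

/-- A congruence: an equivalence relation compatible with both operations. -/
def IsCongruence {S : Type*} [Add S] [Mul S] (r : S → S → Prop) : Prop :=
  Equivalence r ∧ (∀ x x' y y' : S, r x x' → r y y' → r (x + y) (x' + y')) ∧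
    ∀ x x' y y' : S, r x x' → r y y' → r (x * y) (x' * y')

/-- `S` is congruence-simple: it has just two congruences (the identity relation
and the full relation, which are distinct). -/
def CongSimple (S : Type*) [Add S] [Mul S] : Prop :=
  (∃ x y : S, x ≠ y) ∧
    ∀ r : S → S → Prop, IsCongruence r → (∀ x y, r x y ↔ x = y) ∨ ∀ x y, r x y

/-- The two-element semiring `𝕋₄`. -/
inductive T4 : Type where | a | b

instance : Add T4 := ⟨fun x y => match x, y with | .a, .a => .a | _, _ => .b⟩
instance : Mul T4 := ⟨fun x y => match x, y with | .b, .b => .b | _, _ => .a⟩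

/-- The two-element semiring `𝕋₈`. -/
inductive T8 : Type where | a | b

instance : Add T8 := ⟨fun _ _ => .a⟩
instance : Mul T8 := ⟨fun x y => match x, y with | .b, .b => .b | _, _ => .a⟩

/-- Isomorphism of semirings (as sets with two binary operations). -/
def SIso (S T : Type*) [Add S] [Mul S] [Add T] [Mul T] : Prop :=
  ∃ f : S ≃ T, (∀ x y : S, f (x + y) = f x + f y) ∧ ∀ x y : S, f (x * y) = f x * f y

/-- Addition of the semiring `V(G)` on `Option G` (`none` plays the role of `o`):
`x + x = x` and `x + y = o` for `x ≠ y`. -/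
noncomputable def vAdd {G : Type*} (x y : Option G) : Option G :=
  haveI := Classical.decEq (Option G)
  if x = y then x else none

/-- Multiplication of the semiring `V(G)` on `Option G`: it extends the one of `G`,
and `o` is multiplicatively absorbing. -/
def vMul {G : Type*} [Mul G] : Option G → Option G → Option G
  | some x, some y => some (x * y)
  | _, _ => none

/-! The sum `w + w` is again multiplicatively absorbing, so `w + w = w`. Hence
`x ~ y :↔ x + w = y + w` is a congruence, and simplicity makes `w` either additively neutral
or additively absorbing. If `a * b = w` with `a, b ≠ w`, the absence of nilpotents puts `a`
into `K = {x | x * S¹ * b = w}`, an ideal (a bi-ideal in the absorbing case) containing both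
`a` and `w ≠ a`. The congruence `α_K` (resp. `β_K`) is then not the identity, hence
full, and either way this forces `b * b = w`. -/

instance (priority := 100) PaperSemiring.toAddCommSemigroup (S : Type*) [PaperSemiring S] :
    AddCommSemigroup S :=
  { add_assoc := PaperSemiring.add_assoc, add_comm := PaperSemiring.add_comm }

instance (priority := 100) PaperSemiring.toSemigroup (S : Type*) [PaperSemiring S] :
    Semigroup S :=
  { mul_assoc := PaperSemiring.mul_assoc }

instance (priority := 100) PaperSemiring.toDistrib (S : Type*) [PaperSemiring S] :
    Distrib S :=
  { left_distrib := PaperSemiring.left_distrib, right_distrib := PaperSemiring.right_distrib }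

namespace MulAbsorbing

variable {S : Type*}

theorem eq [Mul S] {w z : S} (hw : MulAbsorbing w) (hz : MulAbsorbing z) : z = w :=
  (hz w).1.symm.trans (hw z).2

theorem add_self [Add S] [Mul S] [LeftDistribClass S] [RightDistribClass S] {w : S}
    (hw : MulAbsorbing w) : w + w = w :=
  MulAbsorbing.eq hw fun x => ⟨by rw [mul_add, (hw x).1], by rw [add_mul, (hw x).2]⟩

end MulAbsorbing

section Congruences

variable {S : Type*} [PaperSemiring S]

theorem isCongruence_of_equivalence {r : S → S → Prop} (hr : Equivalence r)
    (hadd : ∀ x y z, r x y → r (x + z) (y + z))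
    (hmul_left : ∀ x y z, r x y → r (z * x) (z * y))
    (hmul_right : ∀ x y z, r x y → r (x * z) (y * z)) : IsCongruence r := by
  refine ⟨hr, fun x x' y y' hx hy => ?_, fun x x' y y' hx hy =>
    hr.trans (hmul_right x x' y hx) (hmul_left y y' x' hy)⟩
  have hy' : r (x' + y) (x' + y') := by
    simpa only [add_comm x'] using hadd y y' x' hy
  exact hr.trans (hadd x x' y hx) hy'

theorem isCongruence_alphaRel {I : Set S} (hI : IsIdealSet I) : IsCongruence (alphaRel I) := by
  obtain ⟨⟨e, he⟩, hadd, hmul⟩ := hI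
  refine isCongruence_of_equivalence ⟨fun x => ⟨e, he, e, he, rfl⟩, ?_, ?_⟩ ?_ ?_ ?_
  · rintro x y ⟨a, ha, b, hb, h⟩
    exact ⟨b, hb, a, ha, h.symm⟩
  · rintro x y z ⟨a, ha, b, hb, h⟩ ⟨c, hc, d, hd, h'⟩
    refine ⟨a + c, hadd a ha c hc, d + b, hadd d hd b hb, ?_⟩
    calc x + (a + c) = (x + a) + c := (add_assoc ..).symm
      _ = (y + c) + b := by rw [h, add_right_comm]
      _ = z + (d + b) := by rw [h', add_assoc]
  · rintro x y z ⟨a, ha, b, hb, h⟩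
    refine ⟨a, ha, b, hb, ?_⟩
    rw [add_right_comm, h, add_right_comm]
  · rintro x y z ⟨a, ha, b, hb, h⟩
    refine ⟨z * a, (hmul z a ha).1, z * b, (hmul z b hb).1, ?_⟩
    rw [← mul_add, h, mul_add]
  · rintro x y z ⟨a, ha, b, hb, h⟩
    refine ⟨a * z, (hmul z a ha).2, b * z, (hmul z b hb).2, ?_⟩
    rw [← add_mul, h, add_mul]

theorem isCongruence_betaRel {J : Set S} (hJ : IsBiIdealSet J) : IsCongruence (betaRel J) := by
  obtain ⟨-, hadd, hmul⟩ := hJ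
  refine isCongruence_of_equivalence ⟨fun x => Or.inr rfl, ?_, ?_⟩ ?_ ?_ ?_
  · rintro x y (⟨hx, hy⟩ | rfl)
    exacts [Or.inl ⟨hy, hx⟩, Or.inr rfl]
  · rintro x y z (⟨hx, hy⟩ | rfl) (⟨hy', hz⟩ | rfl)
    exacts [Or.inl ⟨hx, hz⟩, Or.inl ⟨hx, hy⟩, Or.inl ⟨hy', hz⟩, Or.inr rfl]
  · rintro x y z (⟨hx, hy⟩ | rfl)
    exacts [Or.inl ⟨add_comm z x ▸ hadd z x hx, add_comm z y ▸ hadd z y hy⟩, Or.inr rfl]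
  · rintro x y z (⟨hx, hy⟩ | rfl)
    exacts [Or.inl ⟨(hmul z x hx).1, (hmul z y hy).1⟩, Or.inr rfl]
  · rintro x y z (⟨hx, hy⟩ | rfl)
    exacts [Or.inl ⟨(hmul z x hx).2, (hmul z y hy).2⟩, Or.inr rfl]

end Congruences

namespace CongSimple

variable {S : Type*} [PaperSemiring S]

theorem isZeroElem_or_biAbsorbing (hs : CongSimple S) {w : S} (hw : MulAbsorbing w) :
    IsZeroElem w ∨ BiAbsorbing w := by
  have hww := hw.add_self
  have hI : IsIdealSet ({w} : Set S) :=
    ⟨Set.singleton_nonempty w, by simp [hww], by rintro s _ rfl; exact hw s⟩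
  rcases hs.2 _ (isCongruence_alphaRel hI) with hid | hfull
  · refine Or.inl ⟨hw, fun x => (hid (x + w) x).1 ⟨w, rfl, w, rfl, ?_⟩⟩
    rw [add_assoc, hww]
  · refine Or.inr ⟨hw, fun x => ?_⟩
    obtain ⟨_, rfl, _, rfl, h⟩ := hfull x w
    rwa [hww] at h

theorem subsingleton_or_alphaRel (hs : CongSimple S) {I : Set S} (hI : IsIdealSet I) :
    I.Subsingleton ∨ ∀ x y, alphaRel I x y :=
  (hs.2 _ (isCongruence_alphaRel hI)).imp
    (fun hid i hi j hj => (hid i j).1 ⟨j, hj, i, hi, add_comm i j⟩) id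

theorem subsingleton_or_eq_univ (hs : CongSimple S) {J : Set S} (hJ : IsBiIdealSet J) :
    J.Subsingleton ∨ J = Set.univ := by
  refine (hs.2 _ (isCongruence_betaRel hJ)).imp
    (fun hid i hi j hj => (hid i j).1 (Or.inl ⟨hi, hj⟩)) fun hfull => ?_
  obtain ⟨j, hj⟩ := hJ.1
  exact Set.eq_univ_of_forall fun x => (hfull x j).elim And.left (· ▸ hj)

end CongSimple

section LeftAnnih

variable {S : Type*} [PaperSemiring S] {w : S}

def leftAnnih (w b : S) : Set S :=
  {x | x * b = w ∧ ∀ t, x * (t * b) = w}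

theorem mem_leftAnnih_self (hw : MulAbsorbing w) (b : S) : w ∈ leftAnnih w b :=
  ⟨(hw b).2, fun t => (hw (t * b)).2⟩

theorem mul_mem_leftAnnih (hw : MulAbsorbing w) {b x : S} (s : S) (hx : x ∈ leftAnnih w b) :
    s * x ∈ leftAnnih w b ∧ x * s ∈ leftAnnih w b := by
  refine ⟨⟨by rw [mul_assoc, hx.1, (hw s).1], fun t => by rw [mul_assoc, hx.2 t, (hw s).1]⟩,
    ⟨by rw [mul_assoc, hx.2 s], fun t => ?_⟩⟩
  rw [mul_assoc, ← mul_assoc s t b, hx.2]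

theorem isIdealSet_leftAnnih (hw : MulAbsorbing w) (b : S) : IsIdealSet (leftAnnih w b) := by
  refine ⟨⟨w, mem_leftAnnih_self hw b⟩, fun x hx y hy => ?_, fun s x hx => mul_mem_leftAnnih hw s hx⟩
  refine ⟨by rw [add_mul, hx.1, hy.1, hw.add_self], fun t => ?_⟩
  rw [add_mul, hx.2, hy.2, hw.add_self]

theorem isBiIdealSet_leftAnnih (hw : BiAbsorbing w) (b : S) : IsBiIdealSet (leftAnnih w b) := by
  refine ⟨⟨w, mem_leftAnnih_self hw.1 b⟩, fun s x hx => ?_, fun s x hx => mul_mem_leftAnnih hw.1 s hx⟩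
  refine ⟨by rw [add_mul, hx.1, hw.2], fun t => ?_⟩
  rw [add_mul, hx.2, hw.2]

theorem mem_leftAnnih_of_mul_eq (hw : MulAbsorbing w) (hnil : ∀ x : S, x ≠ w → x * x ≠ w)
    {a b : S} (hab : a * b = w) : a ∈ leftAnnih w b := by
  have hsq : ∀ x : S, x * x = w → x = w := fun x h => by_contra fun hx => hnil x hx h
  have hba : b * a = w := hsq _ <| by
    rw [mul_assoc, ← mul_assoc a, hab, (hw a).2, (hw b).1]
  refine ⟨hab, fun t => hsq _ ?_⟩
  calc a * (t * b) * (a * (t * b)) = a * t * (b * a) * (t * b) := by simp only [mul_assoc]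
    _ = w := by rw [hba, (hw _).1, (hw _).2]

end LeftAnnih

/-- Let `S` be a congruence-simple semiring with a
multiplicatively absorbing element `w` such that `x² ≠ w` for every `x ≠ w`.
Then `a·b ≠ w` for all `a, b ∈ S` with `a ≠ w` and `b ≠ w`. -/
theorem stmt_16 {S : Type*} [PaperSemiring S] (hs : CongSimple S) (w : S)
    (hw : MulAbsorbing w) (hnil : ∀ x : S, x ≠ w → x * x ≠ w) :
    ∀ a b : S, a ≠ w → b ≠ w → a * b ≠ w := by
  intro a b ha hb hab
  have hK : ¬(leftAnnih w b).Subsingleton := fun h =>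
    ha (h (mem_leftAnnih_of_mul_eq hw hnil hab) (mem_leftAnnih_self hw b))
  refine hnil b hb ?_
  rcases hs.isZeroElem_or_biAbsorbing hw with hzero | hbi
  · obtain ⟨i, hi, j, hj, h⟩ :=
      (hs.subsingleton_or_alphaRel (isIdealSet_leftAnnih hw b)).resolve_left hK b w
    calc b * b = (b + i) * b := by rw [add_mul, hi.1, hzero.2]
      _ = w := by rw [h, add_mul, hj.1, (hw b).2, hzero.2]
  · have hKuniv := (hs.subsingleton_or_eq_univ (isBiIdealSet_leftAnnih hbi b)).resolve_left hK
    exact (hKuniv.symm ▸ Set.mem_univ b : b ∈ leftAnnih w b).1
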